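/- For all positive integers r and k, let p be the smallest prime satisfying p > 2k²r². Then there exists a binary (r,k)-batch code of dimension n = rp, length rp + kp, and redundancy kp; in particular its rate is r/(r+k). -/

import Mathlib

/-!
Arrange the `r p` information bits in an array indexed by `Fin r × ZMod p` and, for each slope
`s` in a set `S ⊆ ZMod p` of `k` slopes and each intercept `c`, store the parity of the line
`{(y, c + s y)}`. A bit `u` is recovered from the parity of the line of slope `s` through `u`
together with the other `r - 1` bits on that line.

Call `S` triangle-free if no three lines with distinct slopes from `S` pairwise meet in three
distinct rows. Then, for any fixed recovering set, at most one slope at `u` gives a recovering set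
that meets it, so a request for `k` bits can be served greedily, one bit at a time. A
triangle-free `S` is also built greedily: once `m` slopes are chosen, a new slope repeats one or
closes a triangle with two of them for at most `m + 2 r² m²` values, fewer than `p` while `m < k`.
-/

/-- There is a binary `(r,k)`-batch code of length `N` and dimension `n`: a systematic
injective linear encoder such that every multiset request of `k` information coordinates can
be answered by `k` pairwise disjoint recovering sets, each of size at most `r`. -/
def ExistsRBatchCode (N n r k : ℕ) : Prop :=
  ∃ (h : n ≤ N) (E : (Fin n → ZMod 2) →ₗ[ZMod 2] (Fin N → ZMod 2)),
    Function.Injective E ∧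
    (∀ (x : Fin n → ZMod 2) (i : Fin n), E x (Fin.castLE h i) = x i) ∧
    ∀ req : Fin k → Fin n, ∃ R : Fin k → Finset (Fin N),
      (∀ a b, a ≠ b → Disjoint (R a) (R b)) ∧
      ∀ a, (R a).card ≤ r ∧
        ∀ x x' : Fin n → ZMod 2, (∀ c ∈ R a, E x c = E x' c) → x (req a) = x' (req a)

open Finset Function

section Encoders

variable {ι κ γ A B : Type*}

def IsRecoveringSet (E : (ι → A) → γ → B) (T : Finset γ) (i : ι) : Prop :=
  ∀ x x', (∀ c ∈ T, E x c = E x' c) → x i = x' i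

def IsRBatchEncoder (E : (ι → A) → γ → B) (r k : ℕ) : Prop :=
  ∀ req : Fin k → ι, ∃ T : Fin k → Finset γ,
    Pairwise (Disjoint on T) ∧ ∀ a, #(T a) ≤ r ∧ IsRecoveringSet E (T a) (req a)

def systematicEncoder (R : Type*) [CommRing R] (P : (ι → R) →ₗ[R] (κ → R)) :
    (ι → R) →ₗ[R] (ι ⊕ κ → R) :=
  (LinearEquiv.sumArrowLequivProdArrow ι κ R R).symm.toLinearMap ∘ₗ LinearMap.id.prod P

@[simp]
lemma systematicEncoder_apply {R : Type*} [CommRing R] (P : (ι → R) →ₗ[R] (κ → R))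
    (x : ι → R) : systematicEncoder R P x = Sum.elim x (P x) :=
  rfl

theorem ExistsRBatchCode.of_systematicEncoder [Fintype ι] [Fintype κ] {n m r k : ℕ}
    (hι : Fintype.card ι = n) (hκ : Fintype.card κ = m)
    {P : (ι → ZMod 2) →ₗ[ZMod 2] (κ → ZMod 2)}
    (hP : IsRBatchEncoder (systematicEncoder (ZMod 2) P) r k) :
    ExistsRBatchCode (n + m) n r k := by
  let eι := Fintype.equivFinOfCardEq hι
  let e : Fin (n + m) ≃ ι ⊕ κ :=
    finSumFinEquiv.symm.trans (Equiv.sumCongr eι.symm (Fintype.equivFinOfCardEq hκ).symm)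
  let E := LinearMap.funLeft (ZMod 2) (ZMod 2) e ∘ₗ systematicEncoder (ZMod 2) P ∘ₗ
    LinearMap.funLeft (ZMod 2) (ZMod 2) eι
  have hE : ∀ x c, E x c = systematicEncoder (ZMod 2) P (x ∘ eι) (e c) := fun _ _ => rfl
  have hsys : ∀ x i, E x (Fin.castLE (Nat.le_add_right n m) i) = x i := by
    intro x i
    have : e (Fin.castLE (Nat.le_add_right n m) i) = Sum.inl (eι.symm i) := by
      simp [e, show Fin.castLE (Nat.le_add_right n m) i = Fin.castAdd m i from rfl]
    simp [hE, this]
  refine ⟨Nat.le_add_right n m, E, fun x x' hxx' => funext fun i => ?_, hsys, fun req => ?_⟩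
  · rw [← hsys x, ← hsys x', hxx']
  obtain ⟨T, hdisj, hT⟩ := hP (eι.symm ∘ req)
  refine ⟨fun a => (T a).map e.symm.toEmbedding, fun a b hab => ?_, fun a => ⟨?_, ?_⟩⟩
  · exact (disjoint_map _).2 (hdisj hab)
  · simpa using (hT a).1
  · intro x x' hxx'
    have := (hT a).2 (x ∘ eι) (x' ∘ eι) fun c hc => by
      simpa [hE] using hxx' (e.symm c) (mem_map_of_mem _ hc)
    simpa using this

end Encoders

theorem exists_pairwise_disjoint_of_subsingleton {α β γ : Type*} [Fintype β]
    (T : α → β → Finset γ) (hT : ∀ u w e, {s | ¬Disjoint (T u s) (T w e)}.Subsingleton) :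
    ∀ {m : ℕ}, m ≤ Fintype.card β → ∀ req : Fin m → α,
      ∃ σ : Fin m → β, Pairwise (Disjoint on fun a => T (req a) (σ a))
  | 0, _, _ => ⟨finZeroElim, fun a => a.elim0⟩
  | m + 1, hm, req => by
    classical
    obtain ⟨σ, hσ⟩ := exists_pairwise_disjoint_of_subsingleton T hT (by omega) (req ∘ Fin.castSucc)
    let blocked : Finset β := univ.biUnion fun b : Fin m =>
      {s | ¬Disjoint (T (req (Fin.last m)) s) (T (req b.castSucc) (σ b))}
    have hcard : #blocked < #(univ : Finset β) := by
      refine (card_biUnion_le_card_mul _ _ 1 fun b _ => ?_).trans_lt ?_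
      · exact card_le_one.2 fun s hs s' hs' =>
          hT _ _ _ (mem_filter.1 hs).2 (mem_filter.1 hs').2
      · simpa using hm
    obtain ⟨s, -, hs⟩ := exists_mem_notMem_of_card_lt_card hcard
    have hfree : ∀ b : Fin m, Disjoint (T (req (Fin.last m)) s) (T (req b.castSucc) (σ b)) := by
      intro b
      by_contra h
      exact hs (mem_biUnion.2 ⟨b, mem_univ _, mem_filter.2 ⟨mem_univ _, h⟩⟩)
    refine ⟨Fin.snoc σ s, fun a b hab => ?_⟩
    induction a using Fin.lastCases <;> induction b using Fin.lastCases <;>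
      simp only [onFun, Fin.snoc_last, Fin.snoc_castSucc]
    · exact absurd rfl hab
    · exact hfree _
    · exact (hfree _).symm
    · exact hσ (Fin.castSucc_injective _ |>.ne_iff.1 hab)

namespace LineBatchCode

variable {p r : ℕ}

lemma le_of_two_mul_sq_mul_sq_lt {k : ℕ} (hk : 0 < k) (h : 2 * k ^ 2 * r ^ 2 < p) : r ≤ p :=
  calc r ≤ r ^ 2 := Nat.le_self_pow two_ne_zero r
    _ ≤ 2 * k ^ 2 * r ^ 2 := Nat.le_mul_of_pos_left _ (by positivity)
    _ ≤ p := h.le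

lemma natCast_val_injective (hrp : r ≤ p) : Injective fun y : Fin r => (y.val : ZMod p) := by
  intro y y' h
  have := (ZMod.natCast_eq_natCast_iff' _ _ p).1 h
  rwa [Nat.mod_eq_of_lt (y.2.trans_le hrp), Nat.mod_eq_of_lt (y'.2.trans_le hrp),
    Fin.val_inj] at this

/-- The sum is the column change along the closed path `y₃ → y₂ → y₁ → y₃` of rows that follows
slopes `b`, `a`, `c`; it vanishes exactly when lines of these slopes form such a triangle. -/
def IsTriangleFree (r : ℕ) (S : Finset (ZMod p)) : Prop :=
  ∀ a ∈ S, ∀ b ∈ S, ∀ c ∈ S, a ≠ b → b ≠ c → c ≠ a → ∀ y₁ y₂ y₃ : Fin r,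
    y₁ ≠ y₂ → y₂ ≠ y₃ → y₃ ≠ y₁ →
      a * (y₁.val - y₂.val) + b * (y₂.val - y₃.val) + c * (y₃.val - y₁.val) ≠ 0

def lineCell (s c : ZMod p) (y : Fin r) : Fin r × ZMod p := (y, c + s * y.val)

def intercept (s : ZMod p) (u : Fin r × ZMod p) : ZMod p := u.2 - s * u.1.val

@[simp]
lemma lineCell_intercept (s : ZMod p) (u : Fin r × ZMod p) :
    lineCell s (intercept s u) u.1 = u := by
  simp [lineCell, intercept]

def lineParity (R : Type*) [CommRing R] (r : ℕ) (S : Finset (ZMod p)) :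
    (Fin r × ZMod p → R) →ₗ[R] (S × ZMod p → R) :=
  LinearMap.pi fun q => ∑ y, LinearMap.proj (lineCell q.1 q.2 y)

variable {R : Type*} [CommRing R] {S : Finset (ZMod p)}

@[simp]
lemma lineParity_apply (x : Fin r × ZMod p → R) (q : S × ZMod p) :
    lineParity R r S x q = ∑ y, x (lineCell q.1 q.2 y) := by
  simp [lineParity]

def recSet (u : Fin r × ZMod p) (s : S) : Finset ((Fin r × ZMod p) ⊕ (S × ZMod p)) :=
  insert (Sum.inr (s, intercept s u))
    (((univ.erase u.1).image (lineCell s (intercept s u))).map Embedding.inl)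

lemma card_recSet_le (u : Fin r × ZMod p) (s : S) : #(recSet u s) ≤ r := by
  have hr := u.1.pos
  calc #(recSet u s)
      ≤ #(((univ.erase u.1).image (lineCell s (intercept s u))).map Embedding.inl) + 1 :=
        card_insert_le _ _
    _ ≤ #(univ.erase u.1) + 1 := by rw [card_map]; exact Nat.add_le_add_right card_image_le 1
    _ = r := by rw [card_erase_of_mem (mem_univ _), card_univ, Fintype.card_fin]; omega

lemma isRecoveringSet_recSet (u : Fin r × ZMod p) (s : S) :
    IsRecoveringSet (systematicEncoder R (lineParity R r S)) (recSet u s) u := by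
  have hsplit : ∀ x : Fin r × ZMod p → R, x u = lineParity R r S x (s, intercept s u) -
      ∑ y ∈ univ.erase u.1, x (lineCell s (intercept s u) y) := by
    intro x
    rw [lineParity_apply, ← add_sum_erase _ _ (mem_univ u.1), lineCell_intercept,
      add_sub_cancel_right]
  intro x x' h
  rw [hsplit x, hsplit x']
  congr 1
  · simpa using h _ (mem_insert_self _ _)
  · refine sum_congr rfl fun y hy => ?_
    simpa using h (.inl _) (mem_insert_of_mem (mem_map_of_mem _ (mem_image_of_mem _ hy)))

lemma eq_or_exists_of_not_disjoint_recSet {u w : Fin r × ZMod p} {s e : S}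
    (h : ¬Disjoint (recSet u s) (recSet w e)) :
    (s = e ∧ intercept s u = intercept e w) ∨
      (s ≠ e ∧ ∃ y ≠ u.1, intercept s u + s * y.val = intercept e w + e * y.val) := by
  obtain ⟨z, hz₁, hz₂⟩ := not_disjoint_iff.1 h
  simp only [recSet, mem_insert, mem_map, mem_image, mem_erase, mem_univ, and_true,
    Embedding.inl_apply, exists_exists_and_eq_and] at hz₁ hz₂
  rcases hz₁ with rfl | ⟨y, hy, rfl⟩ <;> rcases hz₂ with hz | ⟨y', -, hz⟩
  · simp only [Sum.inr.injEq, Prod.mk.injEq] at hz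
    exact .inl hz
  · simp at hz
  · simp at hz
  · simp only [Sum.inl.injEq, lineCell, Prod.mk.injEq] at hz
    obtain ⟨rfl, hcol⟩ := hz
    by_cases hse : s = e
    · subst hse
      exact .inl ⟨rfl, add_right_cancel hcol.symm⟩
    · exact .inr ⟨hse, y', hy, hcol.symm⟩

section Prime

variable [Fact p.Prime]

lemma eq_of_lines_through_meet (hrp : r ≤ p) {u : Fin r × ZMod p} {s s' : ZMod p} {y : Fin r}
    (hy : y ≠ u.1) (h : intercept s u + s * y.val = intercept s' u + s' * y.val) : s = s' := by
  have hy' : (y.val : ZMod p) - u.1.val ≠ 0 := sub_ne_zero.2 ((natCast_val_injective hrp).ne hy)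
  have : (s - s') * ((y.val : ZMod p) - u.1.val) = 0 := by
    simp only [intercept] at h
    linear_combination h
  exact sub_eq_zero.1 ((mul_eq_zero.1 this).resolve_right hy')

theorem conflicting_recSet_subsingleton (hrp : r ≤ p) (hS : IsTriangleFree r S)
    (u w : Fin r × ZMod p) (e : S) : {s | ¬Disjoint (recSet u s) (recSet w e)}.Subsingleton := by
  intro s₁ h₁ s₂ h₂
  by_contra hne
  rcases eq_or_exists_of_not_disjoint_recSet h₁ with ⟨rfl, hc₁⟩ | ⟨hne₁, y₁, hy₁, hc₁⟩ <;>
    rcases eq_or_exists_of_not_disjoint_recSet h₂ with ⟨rfl, hc₂⟩ | ⟨hne₂, y₂, hy₂, hc₂⟩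
  · exact hne rfl
  · exact hne (Subtype.ext (eq_of_lines_through_meet hrp hy₂ (hc₁ ▸ hc₂)).symm)
  · exact hne (Subtype.ext (eq_of_lines_through_meet hrp hy₁ (hc₂ ▸ hc₁)))
  · rcases eq_or_ne y₁ y₂ with rfl | hy₁₂
    · exact hne (Subtype.ext (eq_of_lines_through_meet hrp hy₁ (hc₁.trans hc₂.symm)))
    · refine hS s₁ s₁.2 s₂ s₂.2 e e.2 (Subtype.coe_ne_coe.2 hne) (Subtype.coe_ne_coe.2 hne₂)
        (Subtype.coe_ne_coe.2 hne₁.symm) y₁ u.1 y₂ hy₁ hy₂.symm hy₁₂.symm ?_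
      simp only [intercept] at hc₁ hc₂
      linear_combination hc₁ - hc₂

theorem isRBatchEncoder_lineParity (hrp : r ≤ p) (hS : IsTriangleFree r S) {k : ℕ}
    (hk : k ≤ #S) : IsRBatchEncoder (systematicEncoder R (lineParity R r S)) r k := by
  intro req
  obtain ⟨σ, hσ⟩ := exists_pairwise_disjoint_of_subsingleton recSet
    (conflicting_recSet_subsingleton hrp hS) (by simpa using hk) req
  exact ⟨_, hσ, fun a => ⟨card_recSet_le _ _, isRecoveringSet_recSet _ _⟩⟩

/-- The solutions `v` of `v * α + b * β = c * (α + β)`, and `S` itself: every other `v` keeps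
`insert v S` triangle-free. -/
noncomputable def obstructions (r : ℕ) (S : Finset (ZMod p)) : Finset (ZMod p) :=
  S ∪ ((Ioo (0 : ℤ) r ×ˢ Ioo (-(r : ℤ)) r) ×ˢ (S ×ˢ S)).image fun q =>
    (q.2.2 * (q.1.1 + q.1.2 : ℤ) - q.2.1 * q.1.2) / q.1.1

lemma card_obstructions_le (S : Finset (ZMod p)) :
    #(obstructions r S) ≤ #S + 2 * r ^ 2 * #S ^ 2 := by
  refine (card_union_le _ _).trans (Nat.add_le_add_left (card_image_le.trans ?_) _)
  simp only [card_product, Int.card_Ioo]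
  have h₁ : ((r : ℤ) - 0 - 1).toNat ≤ r := by omega
  have h₂ : ((r : ℤ) - -r - 1).toNat ≤ 2 * r := by omega
  calc _ ≤ r * (2 * r) * (#S * #S) := by gcongr
    _ = _ := by ring

lemma mem_obstructions (hrp : r ≤ p) {v b c : ZMod p} (hb : b ∈ S) (hc : c ∈ S)
    {y₁ y₂ y₃ : Fin r} (h₁₂ : y₁ ≠ y₂)
    (h : v * (y₁.val - y₂.val) + b * (y₂.val - y₃.val) + c * (y₃.val - y₁.val) = 0) :
    v ∈ obstructions r S := by
  have hsolve : ∀ α β : ℤ, 0 < α → α < r → -r < β → β < r →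
      v * α + b * β - c * (α + β : ℤ) = 0 → v ∈ obstructions r S := by
    intro α β hα hαr hβ hβr hαβ
    have hα0 : (α : ZMod p) ≠ 0 := fun h0 => by
      have := Int.le_of_dvd hα ((ZMod.intCast_zmod_eq_zero_iff_dvd α p).1 h0)
      omega
    refine mem_union_right _ (mem_image.2 ⟨((α, β), (b, c)), by simp [*], ?_⟩)
    rw [div_eq_iff hα0]
    linear_combination -hαβ
  have := y₁.2
  have := y₂.2
  have := y₃.2
  rcases lt_or_gt_of_ne (Fin.val_injective.ne h₁₂) with hlt | hlt
  · exact hsolve ((y₂ : ℤ) - y₁) ((y₃ : ℤ) - y₂) (by omega) (by omega) (by omega) (by omega)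
      (by push_cast; linear_combination -h)
  · exact hsolve ((y₁ : ℤ) - y₂) ((y₂ : ℤ) - y₃) (by omega) (by omega) (by omega) (by omega)
      (by push_cast; linear_combination h)

lemma IsTriangleFree.insert (hrp : r ≤ p) (hS : IsTriangleFree r S) {v : ZMod p}
    (hv : v ∉ obstructions r S) : IsTriangleFree r (insert v S) := by
  intro a ha b hb c hc hab hbc hca y₁ y₂ y₃ h₁₂ h₂₃ h₃₁ h
  rcases mem_insert.1 ha with rfl | haS <;> rcases mem_insert.1 hb with rfl | hbS <;>
    rcases mem_insert.1 hc with rfl | hcS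
  any_goals first | exact hab rfl | exact hbc rfl | exact hca rfl
  · exact hv (mem_obstructions hrp hbS hcS h₁₂ h)
  · exact hv (mem_obstructions hrp hcS haS h₂₃ (y₃ := y₁) (by linear_combination h))
  · exact hv (mem_obstructions hrp haS hbS h₃₁ (y₃ := y₂) (by linear_combination h))
  · exact hS a haS b hbS c hcS hab hbc hca y₁ y₂ y₃ h₁₂ h₂₃ h₃₁ h

theorem exists_card_eq_isTriangleFree {k : ℕ} (hr : 0 < r) (hkr : 2 * k ^ 2 * r ^ 2 < p) :
    ∃ S : Finset (ZMod p), #S = k ∧ IsTriangleFree r S := by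
  suffices ∀ m ≤ k, ∃ S : Finset (ZMod p), #S = m ∧ IsTriangleFree r S from this k le_rfl
  intro m
  induction m with
  | zero => exact fun _ => ⟨∅, card_empty, by simp [IsTriangleFree]⟩
  | succ m ih =>
    intro hm
    obtain ⟨S, hSm, hS⟩ := ih (by omega)
    have hrp : r ≤ p := le_of_two_mul_sq_mul_sq_lt (by omega) hkr
    have hcard : #(obstructions r S) < #(univ : Finset (ZMod p)) := by
      have := Nat.one_le_pow 2 r hr
      have := Nat.pow_le_pow_left hm 2
      refine (card_obstructions_le S).trans_lt ?_
      rw [card_univ, ZMod.card, hSm]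
      nlinarith
    obtain ⟨v, -, hv⟩ := exists_mem_notMem_of_card_lt_card hcard
    have hvS : v ∉ S := fun h => hv (mem_union_left _ h)
    exact ⟨insert v S, by rw [card_insert_of_notMem hvS, hSm], hS.insert hrp hv⟩

end Prime

end LineBatchCode

theorem stmt17_general (r k p : ℕ) (hr : 0 < r) (hk : 0 < k) (hp : p.Prime)
    (hbig : 2 * k ^ 2 * r ^ 2 < p) :
    ExistsRBatchCode (r * p + k * p) (r * p) r k := by
  have := Fact.mk hp
  obtain ⟨S, hSk, hS⟩ := LineBatchCode.exists_card_eq_isTriangleFree hr hbig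
  exact ExistsRBatchCode.of_systematicEncoder (by simp) (by simp [hSk])
    (LineBatchCode.isRBatchEncoder_lineParity (R := ZMod 2)
      (LineBatchCode.le_of_two_mul_sq_mul_sq_lt hk hbig) hS hSk.ge)

/-- For all positive integers `r, k`, if `p` is the smallest prime with
`p > 2k²r²`, then there is a binary `(r,k)`-batch code of dimension `n = rp`, length
`rp + kp`, and redundancy `kp` (hence of rate `r/(r+k)`). -/
theorem stmt17 (r k p : ℕ) (hr : 0 < r) (hk : 0 < k) (hp : p.Prime)
    (hbig : 2 * k ^ 2 * r ^ 2 < p)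
    (hmin : ∀ q : ℕ, q.Prime → 2 * k ^ 2 * r ^ 2 < q → p ≤ q) :
    ExistsRBatchCode (r * p + k * p) (r * p) r k :=
  stmt17_general r k p hr hk hp hbig
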